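/- (Integrability of the fundamental solution, second part.) For every fixed time T > 0, every index i with 1 ≤ i ≤ m_0, and every exponent p with 1 ≤ p < p_1 := (Q+2)/(Q+1), the partial derivative ∂K/∂x_i belongs to L^p(ℝ^N × (0,T)), i.e. ∫_0^T ∫_{ℝ^N} |∂_{x_i} K(x,t)|^p dx dt < ∞. -/

import Mathlib

open MeasureTheory Matrix Filter

noncomputable section

/-- Partial sums of the block sizes. -/
def blockSum (m : ℕ → ℕ) (j : ℕ) : ℕ := ∑ j' ∈ Finset.range j, m j'

/-- The index of the block containing the `i`-th coordinate. -/
def blockIdx (m : ℕ → ℕ) (i : ℕ) : ℕ := sInf {j : ℕ | i < blockSum m (j + 1)}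

/-- The anisotropic dilation matrix `δ_N(r) = diag(r I_{m₀}, r³ I_{m₁}, …)`. -/
def dil (N : ℕ) (m : ℕ → ℕ) (r : ℝ) : Matrix (Fin N) (Fin N) ℝ :=
  Matrix.diagonal fun i => r ^ (2 * blockIdx m (i : ℕ) + 1)

/-- `E(t) = exp(-tB)`. -/
def Emat (N : ℕ) (B : Matrix (Fin N) (Fin N) ℝ) (t : ℝ) : Matrix (Fin N) (Fin N) ℝ :=
  NormedSpace.exp ((-t) • B)

/-- The matrix `A₀` with upper-left `m₀ × m₀` identity block and zeros elsewhere. -/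
def A0 (N m0 : ℕ) : Matrix (Fin N) (Fin N) ℝ :=
  Matrix.diagonal fun i => if (i : ℕ) < m0 then (1 : ℝ) else 0

/-- `C(t) = ∫₀ᵗ E(s) A₀ E(s)ᵀ ds` (entrywise integral). -/
def Cmat (N : ℕ) (B : Matrix (Fin N) (Fin N) ℝ) (m0 : ℕ) (t : ℝ) : Matrix (Fin N) (Fin N) ℝ :=
  Matrix.of fun i j => ∫ s in (0:ℝ)..t, (Emat N B s * A0 N m0 * (Emat N B s)ᵀ) i j

/-- The normalizing constant `C_N = (4π)^{-N/2} |det C(1)|^{-1/2}`. -/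
def CN (N : ℕ) (B : Matrix (Fin N) (Fin N) ℝ) (m0 : ℕ) : ℝ :=
  (4 * Real.pi) ^ (-(N : ℝ) / 2) * |(Cmat N B m0 1).det| ^ (-(1 : ℝ) / 2)

/-- The Kolmogorov kernel
`K(x,t) = C_N t^{-Q/2} exp(-(1/4)⟨C(1)⁻¹ δ_N(1/√t)x, δ_N(1/√t)x⟩)` for `t > 0`,
and `K(x,t) = 0` for `t ≤ 0`. -/
def Kker (N : ℕ) (m : ℕ → ℕ) (B : Matrix (Fin N) (Fin N) ℝ) (Q : ℕ)
    (x : Fin N → ℝ) (t : ℝ) : ℝ :=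
  if 0 < t then
    CN N B (m 0) * t ^ (-(Q : ℝ) / 2) *
      Real.exp (-(1 / 4) * (((Cmat N B (m 0) 1)⁻¹ *ᵥ (dil N m (1 / Real.sqrt t) *ᵥ x)) ⬝ᵥ
        (dil N m (1 / Real.sqrt t) *ᵥ x)))
  else 0

/-- The `i`-th spatial partial derivative `∂_{x_i} K(x,t)` of the kernel. -/
def DKker (N : ℕ) (m : ℕ → ℕ) (B : Matrix (Fin N) (Fin N) ℝ) (Q : ℕ) (i : Fin N)
    (x : Fin N → ℝ) (t : ℝ) : ℝ :=
  deriv (fun r => Kker N m B Q (Function.update x i r) t) (x i)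

/-- Group convolution on `ℝ^N × (0,T)`:
`(f*g)(x,t) = ∫₀ᵗ ∫_{ℝ^N} f(x - E(t-s)y, t-s) g(y,s) dy ds`. -/
def conv (N : ℕ) (B : Matrix (Fin N) (Fin N) ℝ) (f g : (Fin N → ℝ) × ℝ → ℝ) :
    (Fin N → ℝ) × ℝ → ℝ :=
  fun z => ∫ s in (0:ℝ)..z.2, ∫ y : Fin N → ℝ,
    f (z.1 - Emat N B (z.2 - s) *ᵥ y, z.2 - s) * g (y, s)

/-- Group convolution over all of `ℝ^{N+1}`:
`(f*g)(x,t) = ∫_ℝ ∫_{ℝ^N} f(x - E(t-s)y, t-s) g(y,s) dy ds`. -/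
def convAll (N : ℕ) (B : Matrix (Fin N) (Fin N) ℝ) (f g : (Fin N → ℝ) × ℝ → ℝ) :
    (Fin N → ℝ) × ℝ → ℝ :=
  fun z => ∫ s : ℝ, ∫ y : Fin N → ℝ,
    f (z.1 - Emat N B (z.2 - s) *ᵥ y, z.2 - s) * g (y, s)

/-!
For `i` in the first block, `δ_N(1/√t)` scales `x_i` by `t^{-1/2}`, so differentiating the
Gaussian gives `∂_{x_i} K = -(1/4) t^{-1/2} ((A + Aᵀ) δ_N(1/√t) x)_i K` with `A = C(1)⁻¹`.
If `λ > 0` bounds `A` from below, the linear factor is absorbed by half of the Gaussian: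
`|∂_{x_i} K(x,t)| ≤ c t^{-(Q+1)/2} exp(-λ |δ_N(1/√t) x|² / 8)`.
Raising this to the power `p` and integrating in `x` first, the Gaussian integral contributes
`(det δ_N(1/√t))⁻¹ = t^{Q/2}`, which leaves `∫₀ᵀ t^{Q/2 - p(Q+1)/2} dt`, finite exactly when
`p < (Q+2)/(Q+1)`.
-/

open Real

lemma blockSum_mono (m : ℕ → ℕ) : Monotone (blockSum m) := fun _ _ h =>
  Finset.sum_le_sum_of_subset (Finset.range_subset_range.2 h)

lemma blockIdx_eq {m : ℕ → ℕ} {j k : ℕ} (h₁ : blockSum m j ≤ k) (h₂ : k < blockSum m (j + 1)) :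
    blockIdx m k = j := by
  refine le_antisymm (Nat.sInf_le h₂) (not_lt.1 fun hlt => ?_)
  have hk : k < blockSum m (blockIdx m k + 1) :=
    Nat.sInf_mem (s := {j | k < blockSum m (j + 1)}) ⟨j, h₂⟩
  have := blockSum_mono m (show blockIdx m k + 1 ≤ j from hlt)
  omega

lemma blockIdx_of_lt {m : ℕ → ℕ} {k : ℕ} (hk : k < m 0) : blockIdx m k = 0 :=
  blockIdx_eq (Nat.zero_le k) (by simpa [blockSum] using hk)

lemma sum_range_blockSum (m f : ℕ → ℕ) (J : ℕ) :
    ∑ k ∈ Finset.range (blockSum m J), f (blockIdx m k) = ∑ j ∈ Finset.range J, m j * f j := by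
  induction J with
  | zero => simp [blockSum]
  | succ J ih =>
    have hJ : blockSum m (J + 1) = blockSum m J + m J := Finset.sum_range_succ m J
    rw [hJ, Finset.sum_range_add, ih, Finset.sum_range_succ]
    congr 1
    rw [Finset.sum_congr rfl fun k hk =>
        congrArg f (blockIdx_eq (j := J) (by omega) (by rw [hJ, Finset.mem_range] at *; omega)),
      Finset.sum_const, Finset.card_range, smul_eq_mul]

lemma dil_mulVec_apply (N : ℕ) (m : ℕ → ℕ) (r : ℝ) (x : Fin N → ℝ) (k : Fin N) :
    (dil N m r *ᵥ x) k = r ^ (2 * blockIdx m k + 1) * x k :=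
  mulVec_diagonal _ _ _

lemma dil_mulVec_single {N : ℕ} {m : ℕ → ℕ} {i : Fin N} (hi : (i : ℕ) < m 0) (r a : ℝ) :
    dil N m r *ᵥ Pi.single i a = Pi.single i (r * a) := by
  ext k
  rw [dil_mulVec_apply]
  rcases eq_or_ne k i with rfl | hk
  · simp [blockIdx_of_lt hi]
  · simp [hk]

lemma det_dil {N κ : ℕ} {m : ℕ → ℕ} {Q : ℕ} (hsum : ∑ j ∈ Finset.range (κ + 1), m j = N)
    (hQ : Q = ∑ j ∈ Finset.range (κ + 1), (2 * j + 1) * m j) (r : ℝ) :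
    (dil N m r).det = r ^ Q := by
  have hdeg : ∑ k : Fin N, (2 * blockIdx m k + 1) = Q := by
    rw [Fin.sum_univ_eq_sum_range (fun k => 2 * blockIdx m k + 1), ← hsum, hQ]
    exact (sum_range_blockSum m (fun j => 2 * j + 1) (κ + 1)).trans
      (Finset.sum_congr rfl fun j _ => mul_comm _ _)
  rw [dil, det_diagonal, Finset.prod_pow_eq_pow_sum, hdeg]

lemma measurable_dil_mulVec (N : ℕ) (m : ℕ → ℕ) :
    Measurable fun z : (Fin N → ℝ) × ℝ => dil N m (1 / √z.2) *ᵥ z.1 := by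
  refine measurable_pi_lambda _ fun k => ?_
  simp only [dil_mulVec_apply]
  fun_prop

open MatrixOrder in
theorem Matrix.PosDef.exists_pos_mul_dotProduct_self_le {n : Type*} [Fintype n] [DecidableEq n]
    {A : Matrix n n ℝ} (hA : A.PosDef) :
    ∃ r > 0, ∀ x : n → ℝ, r * (x ⬝ᵥ x) ≤ x ⬝ᵥ (A *ᵥ x) := by
  cases isEmpty_or_nonempty n
  · exact ⟨1, one_pos, fun x => by simp [dotProduct]⟩
  obtain ⟨r, hr, hle⟩ := (CFC.exists_pos_algebraMap_le_iff hA.isHermitian.isSelfAdjoint).2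
    fun x hx => hA.isStrictlyPositive.spectrum_pos hx
  refine ⟨r, hr, fun x => ?_⟩
  simpa [Algebra.algebraMap_eq_smul_one, sub_mulVec, smul_mulVec, dotProduct_sub] using
    (Matrix.le_iff.1 hle).dotProduct_mulVec_nonneg x

section Gaussian

variable {ι : Type*} [Fintype ι] [DecidableEq ι] {c : ℝ} {d : ι → ℝ}

lemma exp_neg_mul_dotProduct_diagonal_mulVec (x : ι → ℝ) :
    exp (-c * ((diagonal d *ᵥ x) ⬝ᵥ (diagonal d *ᵥ x))) =
      ∏ k, exp (-(c * d k ^ 2) * x k ^ 2) := by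
  rw [← exp_sum, dotProduct, Finset.mul_sum]
  congr 1
  refine Finset.sum_congr rfl fun k _ => ?_
  rw [mulVec_diagonal]
  ring

lemma integrable_exp_neg_mul_dotProduct_diagonal_mulVec (hc : 0 < c) (hd : ∀ k, d k ≠ 0) :
    Integrable fun x : ι → ℝ => exp (-c * ((diagonal d *ᵥ x) ⬝ᵥ (diagonal d *ᵥ x))) := by
  simp_rw [exp_neg_mul_dotProduct_diagonal_mulVec]
  exact Integrable.fintype_prod (f := fun k u => exp (-(c * d k ^ 2) * u ^ 2))
    fun k => integrable_exp_neg_mul_sq (by have := hd k; positivity)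

lemma integral_exp_neg_mul_dotProduct_diagonal_mulVec (hd : ∀ k, 0 < d k) :
    ∫ x : ι → ℝ, exp (-c * ((diagonal d *ᵥ x) ⬝ᵥ (diagonal d *ᵥ x))) =
      √(π / c) ^ Fintype.card ι / (diagonal d).det := by
  simp_rw [exp_neg_mul_dotProduct_diagonal_mulVec]
  rw [volume_pi, integral_fintype_prod_eq_prod (f := fun k u => exp (-(c * d k ^ 2) * u ^ 2)),
    det_diagonal, ← Finset.card_univ, ← Finset.prod_const, ← Finset.prod_div_distrib]
  refine Finset.prod_congr rfl fun k _ => ?_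
  rw [integral_gaussian, ← div_div, sqrt_div' _ (sq_nonneg _), sqrt_sq (hd k).le]

end Gaussian

lemma integrableOn_Ioo_rpow {s : ℝ} (hs : -1 < s) (T : ℝ) :
    IntegrableOn (fun t : ℝ => t ^ s) (Set.Ioo 0 T) :=
  (intervalIntegral.intervalIntegrable_rpow' hs).def'.mono_set
    (Set.Ioo_subset_Ioc_self.trans Set.Ioc_subset_uIoc)

lemma one_div_sqrt_pow_inv {t : ℝ} (ht : 0 ≤ t) (n : ℕ) : ((1 / √t) ^ n)⁻¹ = t ^ ((n : ℝ) / 2) := by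
  rw [one_div, inv_pow, inv_inv, sqrt_eq_rpow, ← rpow_natCast, ← rpow_mul ht]
  ring_nf

lemma integrableOn_rpow_mul_exp_neg_dil {N Q : ℕ} {m : ℕ → ℕ}
    (hdet : ∀ r, (dil N m r).det = r ^ Q) {c s : ℝ} (hc : 0 < c) (hs : -1 < s + Q / 2) (T : ℝ) :
    IntegrableOn (fun z : (Fin N → ℝ) × ℝ => z.2 ^ s *
        exp (-c * ((dil N m (1 / √z.2) *ᵥ z.1) ⬝ᵥ (dil N m (1 / √z.2) *ᵥ z.1))))
      (Set.univ ×ˢ Set.Ioo 0 T) := by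
  have hmeas : Measurable fun z : (Fin N → ℝ) × ℝ => z.2 ^ s *
      exp (-c * ((dil N m (1 / √z.2) *ᵥ z.1) ⬝ᵥ (dil N m (1 / √z.2) *ᵥ z.1))) := by
    have := measurable_dil_mulVec N m
    fun_prop
  have hdiag : ∀ t : ℝ, 0 < t → ∀ k : Fin N, 0 < (1 / √t) ^ (2 * blockIdx m k + 1) :=
    fun t ht k => by positivity
  have hmarginal : ∀ t : ℝ, 0 < t → ∫ x : Fin N → ℝ, ‖t ^ s *
      exp (-c * ((dil N m (1 / √t) *ᵥ x) ⬝ᵥ (dil N m (1 / √t) *ᵥ x)))‖ =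
        √(π / c) ^ N * t ^ (s + Q / 2) := by
    intro t ht
    simp_rw [norm_mul, norm_of_nonneg (rpow_nonneg ht.le s), norm_of_nonneg (exp_pos _).le]
    rw [integral_const_mul, dil, integral_exp_neg_mul_dotProduct_diagonal_mulVec (hdiag t ht),
      ← dil, hdet, Fintype.card_fin, div_eq_mul_inv, one_div_sqrt_pow_inv ht.le, rpow_add ht]
    ring
  rw [IntegrableOn, Measure.volume_eq_prod, ← Measure.prod_restrict, Measure.restrict_univ,
    integrable_prod_iff' hmeas.aestronglyMeasurable]
  constructor
  · filter_upwards [ae_restrict_mem measurableSet_Ioo] with t ht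
    exact (integrable_exp_neg_mul_dotProduct_diagonal_mulVec hc
      fun k => (hdiag t ht.1 k).ne').const_mul _
  · exact IntegrableOn.congr_fun ((integrableOn_Ioo_rpow hs T).const_mul _)
      (fun t ht => (hmarginal t ht.1).symm) measurableSet_Ioo

lemma abs_le_one_add_inv_mul_exp {a : ℝ} (ha : 0 < a) (u : ℝ) :
    |u| ≤ (1 + a⁻¹) * exp (a * u ^ 2) := by
  have h₁ : |u| ≤ (1 + a⁻¹) * (a * u ^ 2 + 1) := by
    rw [show (1 + a⁻¹) * (a * u ^ 2 + 1) = a * u ^ 2 + u ^ 2 + 1 + a⁻¹ by field_simp; ring]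
    nlinarith [sq_abs u, abs_nonneg u, sq_nonneg (|u| - 1), inv_pos.2 ha, sq_nonneg u]
  exact h₁.trans (mul_le_mul_of_nonneg_left (add_one_le_exp _) (by positivity))

lemma update_eq_add_smul_single {ι R : Type*} [DecidableEq ι] [Ring R] (x : ι → R) (i : ι)
    (r : R) :
    Function.update x i r = x + (r - x i) • Pi.single i 1 := by
  ext k
  rcases eq_or_ne k i with rfl | hk
  · simp
  · simp [hk]

section QuadraticForm

variable {ι : Type*} [Fintype ι]

lemma quadForm_add_smul {R : Type*} [CommRing R] (A : Matrix ι ι R) (w v : ι → R) (s : R) :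
    (A *ᵥ (w + s • v)) ⬝ᵥ (w + s • v) =
      (A *ᵥ w) ⬝ᵥ w + s * ((A *ᵥ w) ⬝ᵥ v + (A *ᵥ v) ⬝ᵥ w) + s ^ 2 * ((A *ᵥ v) ⬝ᵥ v) := by
  simp only [mulVec_add, mulVec_smul, add_dotProduct, dotProduct_add, smul_dotProduct,
    dotProduct_smul, smul_eq_mul]
  ring

lemma hasDerivAt_quadForm_add_smul (A : Matrix ι ι ℝ) (w v : ι → ℝ) :
    HasDerivAt (fun s : ℝ => (A *ᵥ (w + s • v)) ⬝ᵥ (w + s • v))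
      ((A *ᵥ w) ⬝ᵥ v + (A *ᵥ v) ⬝ᵥ w) 0 := by
  simp_rw [quadForm_add_smul]
  exact ((((hasDerivAt_id' (0 : ℝ)).mul_const _).const_add _).add
    ((hasDerivAt_pow 2 (0 : ℝ)).mul_const ((A *ᵥ v) ⬝ᵥ v))).congr_deriv (by simp)

lemma mulVec_dotProduct_single_add {R : Type*} [CommRing R] [DecidableEq ι] (A : Matrix ι ι R)
    (w : ι → R) (i : ι) (a : R) :
    (A *ᵥ w) ⬝ᵥ Pi.single i a + (A *ᵥ Pi.single i a) ⬝ᵥ w = a * ((A + Aᵀ) *ᵥ w) i := by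
  rw [dotProduct_single, dotProduct_comm (A *ᵥ _), dotProduct_mulVec, dotProduct_single,
    ← mulVec_transpose, add_mulVec, Pi.add_apply]
  ring

lemma abs_mulVec_apply_le_exp (A : Matrix ι ι ℝ) {a : ℝ} (ha : 0 < a) (w : ι → ℝ) (i : ι) :
    |(A *ᵥ w) i| ≤ (∑ k, |A i k|) * (1 + a⁻¹) * exp (a * (w ⬝ᵥ w)) := by
  rw [mul_assoc, Finset.sum_mul]
  refine (Finset.abs_sum_le_sum_abs _ _).trans (Finset.sum_le_sum fun k _ => ?_)
  rw [abs_mul]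
  refine mul_le_mul_of_nonneg_left ((abs_le_one_add_inv_mul_exp ha _).trans ?_) (abs_nonneg _)
  gcongr
  simpa [dotProduct, sq] using Finset.single_le_sum (f := fun k => w k * w k)
    (fun k _ => mul_self_nonneg _) (Finset.mem_univ k)

end QuadraticForm

section Kernel

variable {N : ℕ} {m : ℕ → ℕ} {B : Matrix (Fin N) (Fin N) ℝ} {Q : ℕ}

lemma DKker_eq {i : Fin N} (hi : (i : ℕ) < m 0) (x : Fin N → ℝ) {t : ℝ} (ht : 0 < t) :
    DKker N m B Q i x t = -(1 / 4) * (1 / √t) *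
      (((Cmat N B (m 0) 1)⁻¹ + (Cmat N B (m 0) 1)⁻¹ᵀ) *ᵥ (dil N m (1 / √t) *ᵥ x)) i *
        Kker N m B Q x t := by
  set A := (Cmat N B (m 0) 1)⁻¹
  set D := dil N m (1 / √t)
  set c := CN N B (m 0) * t ^ (-(Q : ℝ) / 2)
  have hK : ∀ y, Kker N m B Q y t = c * exp (-(1 / 4) * ((A *ᵥ (D *ᵥ y)) ⬝ᵥ (D *ᵥ y))) :=
    fun y => if_pos ht
  have hline : ∀ r, D *ᵥ Function.update x i r = D *ᵥ x + (r - x i) • Pi.single i (1 / √t) := by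
    intro r
    rw [update_eq_add_smul_single, mulVec_add, mulVec_smul, dil_mulVec_single hi, mul_one]
  have hderiv := HasDerivAt.comp_sub_const (x i) (x i) (by
    rw [sub_self]
    exact ((hasDerivAt_quadForm_add_smul A (D *ᵥ x) (Pi.single i (1 / √t))).const_mul
      (-(1 / 4))).exp.const_mul c)
  rw [DKker, funext fun r => (hK _).trans (by rw [hline]), hderiv.deriv, hK,
    mulVec_dotProduct_single_add, zero_smul, add_zero]
  ring

lemma abs_Kker_le {lam : ℝ}
    (hA : ∀ w, lam * (w ⬝ᵥ w) ≤ w ⬝ᵥ ((Cmat N B (m 0) 1)⁻¹ *ᵥ w)) (x : Fin N → ℝ) {t : ℝ}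
    (ht : 0 < t) :
    |Kker N m B Q x t| ≤ |CN N B (m 0)| * t ^ (-(Q : ℝ) / 2) *
      exp (-(lam / 4) * ((dil N m (1 / √t) *ᵥ x) ⬝ᵥ (dil N m (1 / √t) *ᵥ x))) := by
  rw [Kker, if_pos ht, abs_mul, abs_mul, abs_of_pos (rpow_pos_of_pos ht _), abs_exp]
  have := hA (dil N m (1 / √t) *ᵥ x)
  rw [dotProduct_comm _ ((Cmat N B (m 0) 1)⁻¹ *ᵥ _)] at this
  exact mul_le_mul_of_nonneg_left (exp_le_exp.2 (by linarith)) (by positivity)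

lemma abs_DKker_le {i : Fin N} (hi : (i : ℕ) < m 0) {lam : ℝ} (hlam : 0 < lam)
    (hA : ∀ w, lam * (w ⬝ᵥ w) ≤ w ⬝ᵥ ((Cmat N B (m 0) 1)⁻¹ *ᵥ w)) (x : Fin N → ℝ) {t : ℝ}
    (ht : 0 < t) :
    |DKker N m B Q i x t| ≤ |CN N B (m 0)| / 4 *
      (∑ k, |((Cmat N B (m 0) 1)⁻¹ + (Cmat N B (m 0) 1)⁻¹ᵀ) i k|) * (1 + (lam / 8)⁻¹) *
        t ^ (-((Q : ℝ) + 1) / 2) *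
          exp (-(lam / 8) * ((dil N m (1 / √t) *ᵥ x) ⬝ᵥ (dil N m (1 / √t) *ᵥ x))) := by
  set σ := (dil N m (1 / √t) *ᵥ x) ⬝ᵥ (dil N m (1 / √t) *ᵥ x)
  have hpow : t ^ (-(Q : ℝ) / 2) * (1 / √t) = t ^ (-((Q : ℝ) + 1) / 2) := by
    rw [sqrt_eq_rpow, one_div, ← rpow_neg ht.le, ← rpow_add ht]
    ring_nf
  rw [DKker_eq hi x ht, abs_mul, abs_mul, abs_mul, abs_of_pos (by positivity : 0 < 1 / √t)]
  calc |(-(1 / 4) : ℝ)| * (1 / √t) *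
        |(((Cmat N B (m 0) 1)⁻¹ + (Cmat N B (m 0) 1)⁻¹ᵀ) *ᵥ (dil N m (1 / √t) *ᵥ x)) i| *
        |Kker N m B Q x t|
      ≤ 1 / 4 * (1 / √t) * ((∑ k, |((Cmat N B (m 0) 1)⁻¹ + (Cmat N B (m 0) 1)⁻¹ᵀ) i k|) *
          (1 + (lam / 8)⁻¹) * exp (lam / 8 * σ)) *
          (|CN N B (m 0)| * t ^ (-(Q : ℝ) / 2) * exp (-(lam / 4) * σ)) := by
        rw [abs_neg, abs_of_pos (by norm_num : (0 : ℝ) < 1 / 4)]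
        gcongr
        · exact abs_mulVec_apply_le_exp _ (by positivity) _ _
        · exact abs_Kker_le hA x ht
    _ = _ := by
        rw [← hpow, show -(lam / 8) * σ = lam / 8 * σ + -(lam / 4) * σ by ring, exp_add]
        ring

end Kernel

lemma measurable_Kker (N : ℕ) (m : ℕ → ℕ) (B : Matrix (Fin N) (Fin N) ℝ) (Q : ℕ) :
    Measurable fun z : (Fin N → ℝ) × ℝ => Kker N m B Q z.1 z.2 := by
  have := measurable_dil_mulVec N m
  unfold Kker
  exact Measurable.ite (measurableSet_lt measurable_const measurable_snd) (by fun_prop)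
    measurable_const

lemma aemeasurable_DKker {N : ℕ} {m : ℕ → ℕ} (B : Matrix (Fin N) (Fin N) ℝ) (Q : ℕ) {i : Fin N}
    (hi : (i : ℕ) < m 0) :
    AEMeasurable (fun z : (Fin N → ℝ) × ℝ => DKker N m B Q i z.1 z.2)
      (volume.restrict (Set.univ ×ˢ Set.Ioi 0)) := by
  have := measurable_dil_mulVec N m
  have := measurable_Kker N m B Q
  refine Measurable.aemeasurable (f := fun z : (Fin N → ℝ) × ℝ => -(1 / 4) * (1 / √z.2) *
      (((Cmat N B (m 0) 1)⁻¹ + (Cmat N B (m 0) 1)⁻¹ᵀ) *ᵥ (dil N m (1 / √z.2) *ᵥ z.1)) i *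
        Kker N m B Q z.1 z.2) (by fun_prop) |>.congr ?_
  filter_upwards [ae_restrict_mem (MeasurableSet.univ.prod measurableSet_Ioi)] with z hz
  exact (DKker_eq hi z.1 hz.2).symm

theorem kernel_deriv_memLp_general (N κ : ℕ) (m : ℕ → ℕ) (B : Matrix (Fin N) (Fin N) ℝ) (Q : ℕ)
    (hsum : ∑ j ∈ Finset.range (κ + 1), m j = N)
    (hQ : Q = ∑ j ∈ Finset.range (κ + 1), (2 * j + 1) * m j)
    (hC1 : (Cmat N B (m 0) 1).PosDef)
    (T : ℝ) (i : Fin N) (hi : (i : ℕ) < m 0)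
    (p : ℝ) (hp1 : 1 ≤ p) (hp2 : p < ((Q : ℝ) + 2) / ((Q : ℝ) + 1)) :
    IntegrableOn (fun z : (Fin N → ℝ) × ℝ => |DKker N m B Q i z.1 z.2| ^ p)
      (Set.univ ×ˢ Set.Ioo 0 T) volume := by
  obtain ⟨lam, hlam, hA⟩ := hC1.inv.exists_pos_mul_dotProduct_self_le
  set c := |CN N B (m 0)| / 4 *
    (∑ k, |((Cmat N B (m 0) 1)⁻¹ + (Cmat N B (m 0) 1)⁻¹ᵀ) i k|) * (1 + (lam / 8)⁻¹)
  have hp : 0 < p := by linarith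
  have hexponent : -1 < -((Q : ℝ) + 1) / 2 * p + Q / 2 := by
    have := (lt_div_iff₀ (by positivity : (0 : ℝ) < Q + 1)).1 hp2
    linarith
  have hmeas := ((aemeasurable_DKker B Q hi).mono_set (Set.prod_mono subset_rfl
    (Set.Ioo_subset_Ioi_self : Set.Ioo (0 : ℝ) T ⊆ _))).abs.pow_const p
  refine ((integrableOn_rpow_mul_exp_neg_dil (det_dil hsum hQ) (by positivity : 0 < lam / 8 * p)
    hexponent T).const_mul (c ^ p)).mono' hmeas.aestronglyMeasurable ?_
  filter_upwards [ae_restrict_mem (MeasurableSet.univ.prod measurableSet_Ioo)] with ⟨x, t⟩ hz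
  obtain ⟨-, ht, -⟩ := hz
  have hc : 0 ≤ c := by positivity
  rw [norm_of_nonneg (by positivity)]
  calc |DKker N m B Q i x t| ^ p
      ≤ (c * t ^ (-((Q : ℝ) + 1) / 2) *
          exp (-(lam / 8) * ((dil N m (1 / √t) *ᵥ x) ⬝ᵥ (dil N m (1 / √t) *ᵥ x)))) ^ p :=
        rpow_le_rpow (abs_nonneg _) (abs_DKker_le hi hlam hA x ht) hp.le
    _ = _ := by
        rw [mul_rpow (by positivity) (exp_pos _).le, mul_rpow hc (rpow_nonneg ht.le _),
          ← rpow_mul ht.le, ← exp_mul]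
        ring_nf

/-- **Integrability of the fundamental solution, second part.**
For every `T > 0`, every `i` with `i < m₀`, and every
`1 ≤ p < p₁ = (Q+2)/(Q+1)`, the partial derivative `∂_{x_i} K` belongs to
`L^p(ℝ^N × (0,T))`. -/
theorem kernel_deriv_memLp (N κ : ℕ) (m : ℕ → ℕ) (B : Matrix (Fin N) (Fin N) ℝ) (Q : ℕ)
    (hN : 2 ≤ N)
    (hmono : ∀ j, j < κ → m (j + 1) ≤ m j) (hm1 : ∀ j, j ≤ κ → 1 ≤ m j)
    (hsum : ∑ j ∈ Finset.range (κ + 1), m j = N)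
    (hQ : Q = ∑ j ∈ Finset.range (κ + 1), (2 * j + 1) * m j)
    (hB : B.trace = 0) (hC1 : (Cmat N B (m 0) 1).PosDef)
    (T : ℝ) (hT : 0 < T) (i : Fin N) (hi : (i : ℕ) < m 0)
    (p : ℝ) (hp1 : 1 ≤ p) (hp2 : p < ((Q : ℝ) + 2) / ((Q : ℝ) + 1)) :
    IntegrableOn (fun z : (Fin N → ℝ) × ℝ => |DKker N m B Q i z.1 z.2| ^ p)
      (Set.univ ×ˢ Set.Ioo 0 T) volume :=
  kernel_deriv_memLp_general N κ m B Q hsum hQ hC1 T i hi p hp1 hp2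

end
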